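/- Let r ≥ 2 be an integer and let β_1, β_2 be integers with 2 ≤ β_1 < β_2. Suppose U, V, W ∈ ℂ[X] are polynomials such that U + V·ω_{r,β_1} + W·ω_{r,β_2} = 0 in ℂ[[X]]. Then U = V = W = 0. -/

import Mathlib

/-- The generalized binomial coefficient `C(q, k) = q(q−1)⋯(q−k+1)/k!`. -/
def genBinom (q : ℚ) (k : ℕ) : ℚ :=
  (∏ i ∈ Finset.range k, (q - i)) / (k.factorial : ℚ)

/-- The formal power series `ω_{r,β} ∈ ℚ[[X]]`, the Taylor expansion at `0` of
`∏_{j=1}^{β−1} (1−jx)^(−1/r)`. -/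
noncomputable def omegaPS (r β : ℕ) : PowerSeries ℚ :=
  ∏ j ∈ Finset.Icc 1 (β - 1),
    PowerSeries.mk (fun k => (-1) ^ k * genBinom (-1 / r) k * (j : ℚ) ^ k)

/-- `ω_{r,β}` viewed in `ℂ[[X]]` via `ℚ ⊂ ℂ`. -/
noncomputable def omegaPSC (r β : ℕ) : PowerSeries ℂ :=
  PowerSeries.map (Rat.castHom ℂ) (omegaPS r β)

/-!
Write `ω_{r,β} = ∏_{0 < j < β} (1 - j X)^(-1/r)` as a product of rescaled binomial series. Then
`a := ω_{r,β₁}` satisfies `a^r A = 1` for a polynomial `A` with simple roots `1/j`, and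
`ω_{r,β₂} = a g` with `g^r B = 1` of the same kind. Hence `a` admits no relation `P + Q a = 0`
over `ℂ[X]` other than the trivial one: it would give `Q^r = (-P)^r A`, and comparing root
multiplicities at a simple root of `A` yields `r ∣ 1`.

The logarithmic derivatives of `a` and `a g` are rational, so differentiating
`U + V a + W a g = 0` and eliminating the `a g` term produces a relation `P + Q a = 0`.
Here `Q = 0` says that the Wronskian of `W a g` and `V a` vanishes, so `W a g = c V a`, i.e.
`W g = c V`, which forces `W = 0`; then `U = V = 0`.
-/

open PowerSeries
open scoped Polynomial

section CommRing

variable {R : Type*} [CommRing R]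

theorem coeff_X_mul_derivative (f : R⟦X⟧) (m : ℕ) :
    coeff m (X * d⁄dX R f) = m * coeff m f := by
  cases m with
  | zero => simp
  | succ m => rw [coeff_succ_X_mul, coeff_derivative, mul_comm]; push_cast; rfl

theorem X_mul_derivative_X_pow (n : ℕ) :
    (X : R⟦X⟧) * d⁄dX R (X ^ n) = (n : R⟦X⟧) * X ^ n := by
  ext m
  rw [coeff_X_mul_derivative, ← map_natCast (C (R := R)), coeff_C_mul, coeff_X_pow]
  split_ifs with h <;> simp [h]

noncomputable def wronskian (f g : R⟦X⟧) : R⟦X⟧ := f * d⁄dX R g - d⁄dX R f * g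

theorem ne_zero_of_pow_mul_eq_one_of_not_dvd {r : ℕ} {G : R⟦X⟧} {A : R[X]} {x : R}
    (hG : G ^ r * A = 1) (hx : ¬ r ∣ A.rootMultiplicity x) : r ≠ 0 := by
  rintro rfl
  rw [pow_zero, one_mul, ← Polynomial.coe_one, Polynomial.coe_inj] at hG
  rw [hG, ← Polynomial.C_1, Polynomial.rootMultiplicity_C] at hx
  exact hx (dvd_refl 0)

theorem natCast_mul_coe_mul_derivative_of_pow_mul_eq_one {r : ℕ} {G : R⟦X⟧} {A : R[X]}
    (hG : G ^ r * A = 1) : r * (A : R⟦X⟧) * d⁄dX R G = -(A.derivative : R⟦X⟧) * G := by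
  cases r with
  | zero =>
    rw [pow_zero, one_mul, ← Polynomial.coe_one, Polynomial.coe_inj] at hG
    simp [hG]
  | succ n =>
    have hD := congrArg (d⁄dX R) hG
    rw [Derivation.leibniz, derivative_pow, derivative_coe, derivative_one, smul_eq_mul,
      smul_eq_mul, add_tsub_cancel_right] at hD
    apply (IsUnit.of_mul_eq_one _ hG).mul_left_cancel
    linear_combination G * hD

theorem eq_zero_of_coe_add_coe_mul_eq_zero [IsDomain R] {r : ℕ} {G : R⟦X⟧} {A : R[X]} {x : R}
    (hG : G ^ r * A = 1) (hx : ¬ r ∣ A.rootMultiplicity x) {P Q : R[X]}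
    (h : (P : R⟦X⟧) + Q * G = 0) : P = 0 ∧ Q = 0 := by
  classical
  suffices hQ : Q = 0 by
    subst hQ
    simpa using h
  by_contra hQ
  have hQG : (Q : R⟦X⟧) * G = ((-P : R[X]) : R⟦X⟧) := by
    push_cast
    linear_combination h
  have hpow : Q ^ r = (-P) ^ r * A := by
    rw [← Polynomial.coe_inj]
    calc ((Q ^ r : R[X]) : R⟦X⟧) = (Q : R⟦X⟧) ^ r * (G ^ r * A) := by simp [hG]
      _ = ((Q : R⟦X⟧) * G) ^ r * A := by ring
      _ = _ := by rw [hQG]; push_cast; rfl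
  have hmult := congrArg (Polynomial.rootMultiplicity x) hpow
  rw [← Polynomial.count_roots] at hx
  rw [Polynomial.rootMultiplicity_mul (hpow ▸ pow_ne_zero r hQ), ← Polynomial.count_roots,
    ← Polynomial.count_roots, ← Polynomial.count_roots, Polynomial.roots_pow,
    Polynomial.roots_pow, Multiset.count_nsmul, Multiset.count_nsmul] at hmult
  exact hx ((Nat.dvd_add_right (dvd_mul_right _ _)).mp (hmult ▸ dvd_mul_right _ _))

end CommRing

section Field

variable {K : Type*} [Field K] [CharZero K]

theorem eq_C_mul_X_pow_of_X_mul_derivative_eq {f : K⟦X⟧} {n : ℕ}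
    (h : X * d⁄dX K f = (n : K⟦X⟧) * f) : f = C (coeff n f) * X ^ n := by
  ext m
  have hm := congrArg (coeff m) h
  rw [coeff_X_mul_derivative, ← map_natCast (C (R := K)), coeff_C_mul, ← sub_eq_zero,
    ← sub_mul] at hm
  rw [coeff_C_mul_X_pow]
  split_ifs with hmn
  · rw [hmn]
  · exact (mul_eq_zero.mp hm).resolve_left (sub_ne_zero.mpr (Nat.cast_injective.ne hmn))

theorem exists_eq_C_mul_of_wronskian_eq_zero {f g : K⟦X⟧} (hg : g ≠ 0)
    (hfg : wronskian f g = 0) : ∃ c : K, f = C c * g := by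
  have h : d⁄dX K f * g = f * d⁄dX K g := (sub_eq_zero.mp hfg).symm
  obtain ⟨u, hu⟩ := isUnit_divided_by_X_pow_order hg
  set n := g.order.toNat
  have hdu : d⁄dX K ↑u⁻¹ = -(↑u⁻¹ : K⟦X⟧) ^ 2 * d⁄dX K ↑u := derivative_inv u
  set w : K⟦X⟧ := ↑u
  set v : K⟦X⟧ := ↑u⁻¹
  have hwv : w * v = 1 := u.mul_inv
  have hgw : g = X ^ n * w := by rw [hu]; exact X_pow_order_mul_divXPowOrder.symm
  -- `f / w` solves Euler's equation `X k' = n k`, whose solutions are the multiples of `X ^ n`.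
  have hXk : X * d⁄dX K (f * v) = (n : K⟦X⟧) * (f * v) := by
    have hXn : (X : K⟦X⟧) ^ n * w ^ 2 ≠ 0 :=
      mul_ne_zero (pow_ne_zero n X_ne_zero) (pow_ne_zero 2 u.ne_zero)
    refine mul_left_cancel₀ hXn ?_
    rw [Derivation.leibniz, hdu, smul_eq_mul, smul_eq_mul]
    rw [hgw, Derivation.leibniz, smul_eq_mul, smul_eq_mul] at h
    linear_combination (X : K⟦X⟧) * h + f * w * X_mul_derivative_X_pow (R := K) n
      + ((X : K⟦X⟧) ^ (n + 1) * w * d⁄dX K f - n * X ^ n * w * f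
        - (w * v + 1) * X ^ (n + 1) * f * d⁄dX K w) * hwv
  refine ⟨coeff n (f * v), ?_⟩
  calc f = f * v * w := by rw [mul_assoc, mul_comm v, hwv, mul_one]
    _ = C (coeff n (f * v)) * X ^ n * w := by rw [← eq_C_mul_X_pow_of_X_mul_derivative_eq hXk]
    _ = C (coeff n (f * v)) * g := by rw [hgw, mul_assoc]

theorem wronskian_eq_zero_of_coe_add_mul_add_mul_eq_zero {r : ℕ} {a b : K⟦X⟧} {A B : K[X]}
    {x : K} (ha : a ^ r * A = 1) (hb : b ^ r * B = 1) (hx : ¬ r ∣ A.rootMultiplicity x)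
    {U V W : K[X]} (h : (U : K⟦X⟧) + V * a + W * b = 0) :
    wronskian ((W : K⟦X⟧) * b) ((V : K⟦X⟧) * a) = 0 := by
  have hA : A ≠ 0 := by rintro rfl; simp at ha
  have hB : B ≠ 0 := by rintro rfl; simp at hb
  have hda := natCast_mul_coe_mul_derivative_of_pow_mul_eq_one ha
  have hdb := natCast_mul_coe_mul_derivative_of_pow_mul_eq_one hb
  have hD := congrArg (d⁄dX K) h
  simp only [map_add, Derivation.leibniz, smul_eq_mul, derivative_coe, map_zero] at hD
  have hcast : ((r : K[X]) : K⟦X⟧) = r := map_natCast Polynomial.coeToPowerSeries.ringHom r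
  -- `M • d⁄dX` maps `K[X] a` and `K[X] b` into themselves:
  -- `M (V a)' = Vh a` and `M (W b)' = Wh b`.
  set M : K[X] := r * A * B
  set Uh : K[X] := M * U.derivative
  set Vh : K[X] := M * V.derivative - B * A.derivative * V
  set Wh : K[X] := M * W.derivative - A * B.derivative * W
  have hhat : (Uh : K⟦X⟧) + Vh * a + Wh * b = 0 := by
    simp only [Uh, Vh, Wh, M]
    push_cast [hcast]
    linear_combination
      (r * A * B : K⟦X⟧) * hD - (B * V : K⟦X⟧) * hda - (A * W : K⟦X⟧) * hdb
  obtain ⟨-, hQ⟩ := eq_zero_of_coe_add_coe_mul_eq_zero ha hx (P := Wh * U - W * Uh)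
    (Q := Wh * V - W * Vh) (by push_cast; linear_combination Wh * h - W * hhat)
  have hM : (M : K⟦X⟧) ≠ 0 := by
    rw [Ne, Polynomial.coe_eq_zero_iff]
    exact mul_ne_zero (mul_ne_zero
      (Nat.cast_ne_zero.mpr (ne_zero_of_pow_mul_eq_one_of_not_dvd ha hx)) hA) hB
  refine (mul_eq_zero.mp ?_).resolve_left hM
  have hQ' : ((Wh * V - W * Vh : K[X]) : K⟦X⟧) = 0 := by rw [hQ]; rfl
  simp only [wronskian, Derivation.leibniz, smul_eq_mul, derivative_coe]
  simp only [Vh, Wh, M] at hQ' ⊢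
  push_cast [hcast] at hQ' ⊢
  linear_combination
    -a * b * hQ' + (W * V * B * b : K⟦X⟧) * hda - (W * V * A * a : K⟦X⟧) * hdb

theorem eq_zero_of_coe_add_mul_add_mul_mul_eq_zero {r : ℕ} {a g : K⟦X⟧} {A B : K[X]}
    {x y z : K} (ha : a ^ r * A = 1) (hg : g ^ r * B = 1) (hx : ¬ r ∣ A.rootMultiplicity x)
    (hy : ¬ r ∣ B.rootMultiplicity y) (hz : ¬ r ∣ (A * B).rootMultiplicity z)
    {U V W : K[X]} (h : (U : K⟦X⟧) + V * a + W * (a * g) = 0) : U = 0 ∧ V = 0 ∧ W = 0 := by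
  have hb : (a * g) ^ r * ↑(A * B) = 1 := by
    push_cast
    linear_combination (g ^ r * B) * ha + hg
  have ha0 : a ≠ 0 := by
    rintro rfl
    rw [zero_pow (ne_zero_of_pow_mul_eq_one_of_not_dvd ha hx), zero_mul] at ha
    exact zero_ne_one ha
  suffices hW : W = 0 by
    subst hW
    obtain ⟨hU, hV⟩ := eq_zero_of_coe_add_coe_mul_eq_zero ha hx (by simpa using h)
    exact ⟨hU, hV, rfl⟩
  rcases eq_or_ne V 0 with rfl | hV
  · exact (eq_zero_of_coe_add_coe_mul_eq_zero hb hz (by simpa using h)).2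
  have hVa : (V : K⟦X⟧) * a ≠ 0 := mul_ne_zero (by simpa using hV) ha0
  obtain ⟨c, hc⟩ := exists_eq_C_mul_of_wronskian_eq_zero hVa
    (wronskian_eq_zero_of_coe_add_mul_add_mul_eq_zero ha hb hx h)
  refine (eq_zero_of_coe_add_coe_mul_eq_zero hg hy (P := -Polynomial.C c * V) (Q := W) ?_).2
  refine (mul_eq_zero.mp ?_).resolve_left ha0
  push_cast
  linear_combination hc

end Field

section ProdOneSubMulX

noncomputable def prodOneSubMulX (R : Type*) [CommRing R] (S : Finset ℕ) : R[X] :=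
  ∏ j ∈ S, (1 - Polynomial.C (j : R) * Polynomial.X)

variable (K : Type*) [Field K] [CharZero K]

/-- The expansion of `∏_{j ∈ S} (1 - j X) ^ q`. -/
noncomputable def prodOneSubMulXPowSeries (q : ℚ) (S : Finset ℕ) : K⟦X⟧ :=
  ∏ j ∈ S, rescale (-(j : K)) (binomialSeries K q)

variable {K}

theorem binomialSeries_pow (q : ℚ) (r : ℕ) :
    binomialSeries K q ^ r = binomialSeries K (r * q) := by
  induction r with
  | zero => simp
  | succ r ih => rw [pow_succ, ih, ← binomialSeries_add, Nat.cast_succ, add_one_mul]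

theorem prodOneSubMulXPowSeries_pow_mul {q : ℚ} {r : ℕ} (hq : r * q = -1) (S : Finset ℕ) :
    prodOneSubMulXPowSeries K q S ^ r * prodOneSubMulX K S = 1 := by
  rw [prodOneSubMulXPowSeries, prodOneSubMulX, ← Polynomial.coeToPowerSeries.ringHom_apply,
    map_prod, ← Finset.prod_pow, ← Finset.prod_mul_distrib]
  refine Finset.prod_eq_one fun j _ => ?_
  have hlin : Polynomial.coeToPowerSeries.ringHom (1 - Polynomial.C (j : K) * Polynomial.X)
      = rescale (-(j : K)) (binomialSeries K (1 : ℚ)) := by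
    have h1 : binomialSeries K (1 : ℚ) = 1 + X := by
      simpa using binomialSeries_nat (R := ℚ) (A := K) 1
    rw [h1, map_add, map_one, rescale_X, map_neg, map_sub, map_one, map_mul,
      Polynomial.coeToPowerSeries.ringHom_apply, Polynomial.coeToPowerSeries.ringHom_apply,
      Polynomial.coe_C, Polynomial.coe_X]
    ring
  rw [hlin, ← map_pow, ← map_mul, binomialSeries_pow, ← binomialSeries_add, hq,
    neg_add_cancel, binomialSeries_zero, map_one]

theorem prodOneSubMulX_ne_zero (S : Finset ℕ) : prodOneSubMulX K S ≠ 0 :=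
  Finset.prod_ne_zero_iff.mpr fun j _ h => by simpa using congrArg (Polynomial.coeff · 0) h

theorem rootMultiplicity_prodOneSubMulX {S : Finset ℕ} {j : ℕ} (hS : 0 ∉ S) (hj : j ∈ S) :
    (prodOneSubMulX K S).rootMultiplicity (j : K)⁻¹ = 1 := by
  have hj0 : (j : K) ≠ 0 := Nat.cast_ne_zero.mpr (ne_of_mem_of_not_mem hj hS)
  have hfac : 1 - Polynomial.C (j : K) * Polynomial.X
      = Polynomial.C (-(j : K)) * (Polynomial.X - Polynomial.C (j : K)⁻¹) := by
    rw [mul_sub, ← Polynomial.C_mul, neg_mul, mul_inv_cancel₀ hj0, Polynomial.C_neg,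
      Polynomial.C_neg, map_one]
    ring
  have hrest :
      ¬ (∏ i ∈ S.erase j, (1 - Polynomial.C (i : K) * Polynomial.X)).IsRoot (j : K)⁻¹ := by
    simp only [Polynomial.IsRoot, Polynomial.eval_prod, Polynomial.eval_sub, Polynomial.eval_one,
      Polynomial.eval_mul, Polynomial.eval_C, Polynomial.eval_X]
    refine Finset.prod_ne_zero_iff.mpr fun i hi => ?_
    rw [sub_ne_zero, ne_comm, ← div_eq_mul_inv, ne_eq, div_eq_one_iff_eq hj0, Nat.cast_inj]
    exact Finset.ne_of_mem_erase hi
  have hne := prodOneSubMulX_ne_zero (K := K) S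
  rw [prodOneSubMulX, ← Finset.mul_prod_erase S _ hj] at hne ⊢
  rw [Polynomial.rootMultiplicity_mul hne, Polynomial.rootMultiplicity_eq_zero hrest, hfac,
    Polynomial.rootMultiplicity_mul (hfac ▸ left_ne_zero_of_mul hne),
    Polynomial.rootMultiplicity_C, Polynomial.rootMultiplicity_X_sub_C_self]

end ProdOneSubMulX

theorem genBinom_eq_choose (q : ℚ) (k : ℕ) : genBinom q k = Ring.choose q k := by
  rw [Ring.choose_eq_smul, genBinom, ← descPochhammer_eval_eq_prod_range,
    ← Polynomial.aeval_eq_smeval, ← descPochhammer_map (algebraMap ℤ ℚ),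
    Polynomial.eval_map_algebraMap, smul_eq_mul, div_eq_inv_mul]

theorem omegaPSC_eq_prodOneSubMulXPowSeries (r β : ℕ) :
    omegaPSC r β = prodOneSubMulXPowSeries ℂ (-1 / r) (Finset.Ico 1 β) := by
  have hIco : Finset.Icc 1 (β - 1) = Finset.Ico 1 β := by
    ext
    simp only [Finset.mem_Icc, Finset.mem_Ico]
    omega
  rw [omegaPSC, omegaPS, map_prod, prodOneSubMulXPowSeries, hIco]
  refine Finset.prod_congr rfl fun j _ => ?_
  ext k
  simp only [coeff_map, coeff_mk, coeff_rescale, binomialSeries_coeff, genBinom_eq_choose,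
    eq_ratCast, Rat.smul_one_eq_cast]
  push_cast
  ring

/-- **Linear independence of the ω functions** (Lemma 5.3).
If `U, V, W ∈ ℂ[X]` satisfy `U + V·ω_{r,β₁} + W·ω_{r,β₂} = 0` in `ℂ[[X]]`, then
`U = V = W = 0`. -/
theorem omega_linear_independence (r : ℕ) (hr : 2 ≤ r)
    (β₁ β₂ : ℕ) (hβ₁ : 2 ≤ β₁) (hβ₁₂ : β₁ < β₂)
    (U V W : Polynomial ℂ)
    (h : (U : PowerSeries ℂ) + (V : PowerSeries ℂ) * omegaPSC r β₁
          + (W : PowerSeries ℂ) * omegaPSC r β₂ = 0) :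
    U = 0 ∧ V = 0 ∧ W = 0 := by
  have hq : (r : ℚ) * (-1 / r) = -1 := by field_simp
  have hsimple {m n : ℕ} (hm : 1 ≤ m) (hmn : m < n) :
      ¬ r ∣ (prodOneSubMulX ℂ (Finset.Ico m n)).rootMultiplicity (m : ℂ)⁻¹ := by
    rw [rootMultiplicity_prodOneSubMulX (by simp only [Finset.mem_Ico]; omega)
      (by simp only [Finset.mem_Ico]; omega)]
    exact Nat.not_dvd_of_pos_of_lt one_pos hr
  have hIco : Finset.Ico 1 β₂ = Finset.Ico 1 β₁ ∪ Finset.Ico β₁ β₂ :=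
    (Finset.Ico_union_Ico_eq_Ico (by omega) hβ₁₂.le).symm
  have hdisj := Finset.Ico_disjoint_Ico_consecutive 1 β₁ β₂
  have hω : prodOneSubMulXPowSeries ℂ (-1 / r) (Finset.Ico 1 β₂)
      = prodOneSubMulXPowSeries ℂ (-1 / r) (Finset.Ico 1 β₁)
        * prodOneSubMulXPowSeries ℂ (-1 / r) (Finset.Ico β₁ β₂) := by
    rw [hIco]
    exact Finset.prod_union hdisj
  have hA : prodOneSubMulX ℂ (Finset.Ico 1 β₂)
      = prodOneSubMulX ℂ (Finset.Ico 1 β₁) * prodOneSubMulX ℂ (Finset.Ico β₁ β₂) := by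
    rw [hIco]
    exact Finset.prod_union hdisj
  rw [omegaPSC_eq_prodOneSubMulXPowSeries, omegaPSC_eq_prodOneSubMulXPowSeries, hω] at h
  exact eq_zero_of_coe_add_mul_add_mul_mul_eq_zero (prodOneSubMulXPowSeries_pow_mul hq _)
    (prodOneSubMulXPowSeries_pow_mul hq _) (hsimple le_rfl (by omega))
    (hsimple (by omega) hβ₁₂) (hA ▸ hsimple le_rfl (by omega)) h
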